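/- Let A be a 2×2 Hermitian matrix of Laurent polynomials over ℂ whose entries have symmetry, with A_{1,1} and A_{2,2} having symmetry with type 1·z⁰, A_{1,2} having symmetry with type α(z) = ε₀ z^{c₀}, and A_{2,1} having symmetry with type ε₀ z^{−c₀}, where either c₀ is odd (ε₀ ∈ {1,−1} arbitrary) or ε₀ = 1 and c₀ is even. Suppose det A(z) = C identically, where C is a negative real constant. Then there exists a strongly invertible 2×2 matrix V of Laurent polynomials whose entries have symmetry, with V_{1,1} and V_{2,2} having symmetry with type 1·z⁰, V_{1,2} having symmetry with type ε₀ z^{c₀} and V_{2,1} having symmetry with type ε₀ z^{−c₀}, such that at least one entry of the matrix V(z)A(z)V⋆(z) is the zero Laurent polynomial. -/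

import Mathlib

/-! Conjugating `A` by a shear `!![1, e; 0, 1]` with `e` of symmetry type `ε₀ z^c₀` preserves
all hypotheses and replaces `A₀₀` by `A₀₀ + e A₁₀ + e⋆ A₀₁ + e e⋆ A₁₁`, leaving `A₁₁` alone.
Suppose `0 < m = deg A₀₀` and `n = deg A₁₁ ≤ m`. As `det A` is constant, the top terms of
`A₀₀ A₁₁` and `A₀₁ A₁₀ = A₀₁ A₀₁⋆` cancel; this fixes the degree `q` of `A₀₁` and the relation
`a b = ε₀ |t|²` between the top coefficients of `A₀₀`, `A₁₁`, `A₀₁`. It is exactly what is needed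
for `e = s z^g + ε₀ s z^(c₀ - g)`, with `g = m + c₀ - q` and a suitable `s`, to kill every
coefficient of the new `A₀₀` from `z^m` on. If `n = m` then `c₀ = 2 (q - m)` is even, which is
where `ε₀ = 1` is used. Swapping the indices handles `m < n`, and induction on `m + n` ends with
a vanishing entry or a constant `A₀₀ = a ≠ 0`, where `V = !![1, 0; -A₁₀, A₀₀]` kills `A₀₁`. -/

open LaurentPolynomial Matrix
open scoped Classical

noncomputable section

abbrev LP := LaurentPolynomial ℂ

namespace QT

/-- The coefficient of `z^k` in a Laurent polynomial. -/
def coeff (u : LP) (k : ℤ) : ℂ := (AddMonoidAlgebra.coeff u) k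

/-- The Hermitian conjugate `u⋆(z) = Σ conj(u(k)) z^{-k}`. -/
def hstar (u : LP) : LP :=
  AddMonoidAlgebra.ofCoeff (
    Finsupp.mapDomain (fun k => -k)
      (Finsupp.mapRange (starRingEnd ℂ) (map_zero _) (AddMonoidAlgebra.coeff u)))

/-- `u` has symmetry with type `ε z^c`, i.e. `u(k) = ε u(c-k)` for all `k`. -/
def SymT (u : LP) (ε : ℂ) (c : ℤ) : Prop := ∀ k : ℤ, coeff u k = ε * coeff u (c - k)

def Sgn (ε : ℂ) : Prop := ε = 1 ∨ ε = -1

/-- `u` has symmetry (with some type). -/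
def HasSym (u : LP) : Prop := ∃ ε c, Sgn ε ∧ SymT u ε c

/-- The Laurent polynomial `z - a`. -/
def zsub (a : ℂ) : LP := T 1 - LaurentPolynomial.C a

/-- `m` is the multiplicity of `z₀` as a zero of `u`. -/
def mzIs (u : LP) (z₀ : ℂ) (m : ℕ) : Prop := zsub z₀ ^ m ∣ u ∧ ¬ zsub z₀ ^ (m + 1) ∣ u

/-- The multiplicity of `z₀` as a zero of `u`, as a function. -/
def mzF (u : LP) (z₀ : ℂ) : ℕ := sSup {m : ℕ | zsub z₀ ^ m ∣ u}

/-- The difference-of-(Hermitian)-squares property with respect to symmetry type `ε z^c`. -/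
def DOS (u : LP) (ε : ℂ) (c : ℤ) : Prop :=
  ∃ (u₁ u₂ : LP) (ε₁ ε₂ : ℂ) (c₁ c₂ : ℤ),
    Sgn ε₁ ∧ Sgn ε₂ ∧ SymT u₁ ε₁ c₁ ∧ SymT u₂ ε₂ c₂ ∧
    u₁ * hstar u₁ - u₂ * hstar u₂ = u ∧ ε₁ * ε₂ = ε ∧ c₁ - c₂ = c

/-- Degree: the largest exponent with nonzero coefficient (0 for the zero polynomial). -/
def degL (u : LP) : ℤ :=
  if h : u = 0 then 0
  else (AddMonoidAlgebra.coeff u).support.max'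
    (Finsupp.support_nonempty_iff.mpr fun h' => h (AddMonoidAlgebra.coeff_injective h'))

/-- Lower degree: the smallest exponent with nonzero coefficient (0 for zero). -/
def ldegL (u : LP) : ℤ :=
  if h : u = 0 then 0
  else (AddMonoidAlgebra.coeff u).support.min'
    (Finsupp.support_nonempty_iff.mpr fun h' => h (AddMonoidAlgebra.coeff_injective h'))

/-- Length `deg - ldeg`, with `len 0 = ⊥`. -/
def lenL (u : LP) : WithBot ℤ := if u = 0 then ⊥ else ((degL u - ldegL u : ℤ) : WithBot ℤ)

/-- `g` is a greatest common divisor of `a` and `b`. -/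
def IsGCD2 (g a b : LP) : Prop := g ∣ a ∧ g ∣ b ∧ ∀ e : LP, e ∣ a → e ∣ b → e ∣ g

/-- `g` is a greatest common divisor of `a`, `b`, `c`, `d`. -/
def IsGCD4 (g a b c d : LP) : Prop :=
  g ∣ a ∧ g ∣ b ∧ g ∣ c ∧ g ∣ d ∧ ∀ e : LP, e ∣ a → e ∣ b → e ∣ c → e ∣ d → e ∣ g

/-- The Hermitian conjugate transpose of a matrix of Laurent polynomials. -/
def hstarM (A : Matrix (Fin 2) (Fin 2) LP) : Matrix (Fin 2) (Fin 2) LP :=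
  fun i j => hstar (A j i)

def IsHerm (A : Matrix (Fin 2) (Fin 2) LP) : Prop := hstarM A = A

/-- `diag(1, -1)`. -/
def Jmat : Matrix (Fin 2) (Fin 2) LP := Matrix.diagonal ![1, -1]

/-- A square matrix of Laurent polynomials is strongly invertible if its determinant is a
nonzero monomial. -/
def StrongInv (A : Matrix (Fin 2) (Fin 2) LP) : Prop :=
  ∃ (lam : ℂ) (k : ℤ), lam ≠ 0 ∧ A.det = LaurentPolynomial.C lam * T k

/-- Compatible symmetry for a `2×2` matrix of Laurent polynomials. -/
def CompatSym (A : Matrix (Fin 2) (Fin 2) LP) : Prop :=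
  ∃ (ε ε' : Fin 2 → ℂ) (c c' : Fin 2 → ℤ),
    (∀ j, Sgn (ε j)) ∧ (∀ k, Sgn (ε' k)) ∧
    ∀ j k, SymT (A j k) (ε j * ε' k) (c' k - c j)

/-- Substitution `z ↦ z²`. -/
def sqDom (u : LP) : LP :=
  AddMonoidAlgebra.ofCoeff (Finsupp.mapDomain (fun k => 2 * k) (AddMonoidAlgebra.coeff u))

/-- Substitution `z ↦ -z`. -/
def negSub (u : LP) : LP :=
  (AddMonoidAlgebra.coeff u).sum fun k c =>
    (AddMonoidAlgebra.ofCoeff (Finsupp.single k ((-1 : ℂ) ^ k * c)) : LP)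

/-- The `γ`-coset `u^{[γ]}(z) = Σ_k u(γ + 2k) z^k`. -/
def cosetL (u : LP) (γ : ℤ) : LP :=
  AddMonoidAlgebra.ofCoeff (
    Finsupp.comapDomain (fun k : ℤ => γ + 2 * k) (AddMonoidAlgebra.coeff u)
      (by intro a _ b _ h; simp only at h; omega))

/-- Evaluation of a Laurent polynomial at a point. -/
def evalL (u : LP) (z : ℂ) : ℂ := (AddMonoidAlgebra.coeff u).sum fun k c => c * z ^ k

/-- `{a; b₁, b₂}_{Θ,(1,-1)}` is a quasi-tight framelet filter bank. -/
def QTFB (a Θ b₁ b₂ : LP) : Prop :=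
  sqDom Θ * hstar a * a + hstar b₁ * b₁ - hstar b₂ * b₂ = Θ ∧
  sqDom Θ * hstar a * negSub a + hstar b₁ * negSub b₁ - hstar b₂ * negSub b₂ = 0

/-- The matrix `N_{a,Θ|n_b}` built from the quotients `A`, `B`. -/
def Nmat (A B : LP) : Matrix (Fin 2) (Fin 2) LP :=
  LaurentPolynomial.C (2 : ℂ)⁻¹ •
    !![cosetL A 0 + cosetL B 0, cosetL A 1 - cosetL B 1;
       T 1 * (cosetL A 1 + cosetL B 1), cosetL A 0 - cosetL B 0]

@[ext] lemma coeff_ext {u v : LP} (h : ∀ k, coeff u k = coeff v k) : u = v :=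
  LaurentPolynomial.ext h

@[simp] lemma coeff_zero (k : ℤ) : coeff 0 k = 0 := rfl
@[simp] lemma coeff_add (u v : LP) (k : ℤ) : coeff (u + v) k = coeff u k + coeff v k := rfl
@[simp] lemma coeff_neg (u : LP) (k : ℤ) : coeff (-u) k = -coeff u k := rfl
@[simp] lemma coeff_sub (u v : LP) (k : ℤ) : coeff (u - v) k = coeff u k - coeff v k := rfl

lemma coeff_C (r : ℂ) (k : ℤ) : coeff (C r) k = if k = 0 then r else 0 := C_apply r k

lemma coeff_C_mul_T (r : ℂ) (a k : ℤ) : coeff (C r * T a) k = if k = a then r else 0 := by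
  rw [← single_eq_C_mul_T, coeff, AddMonoidAlgebra.coeff_single, Finsupp.single_apply]
  exact if_congr eq_comm rfl rfl

@[simp] lemma coeff_C_mul_T_mul (r : ℂ) (a : ℤ) (u : LP) (k : ℤ) :
    coeff (C r * T a * u) k = r * coeff u (k - a) := by
  rw [← single_eq_C_mul_T, coeff, AddMonoidAlgebra.coeff_single_mul_apply, neg_add_eq_sub]
  rfl

lemma coeff_hstar (u : LP) (k : ℤ) : coeff (hstar u) k = starRingEnd ℂ (coeff u (-k)) := by
  change (Finsupp.mapDomain _ _ : ℤ →₀ ℂ) k = _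
  rw [← neg_neg k, Finsupp.mapDomain_apply neg_injective, neg_neg]
  rfl

lemma hstar_eq_invert_map (u : LP) :
    hstar u = invert (AddMonoidAlgebra.mapRingHom ℤ (starRingEnd ℂ) u) := by
  ext k
  exact (coeff_hstar u k).trans (by simp [coeff])

lemma hstar_add (u v : LP) : hstar (u + v) = hstar u + hstar v := by
  simp only [hstar_eq_invert_map, map_add]

lemma hstar_mul (u v : LP) : hstar (u * v) = hstar u * hstar v := by
  simp only [hstar_eq_invert_map, map_mul]

@[simp] lemma hstar_one : hstar 1 = 1 := by
  simp [hstar_eq_invert_map]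

lemma hstar_hstar (u : LP) : hstar (hstar u) = u := by
  ext k
  simp [coeff_hstar]

lemma hstar_C_mul_T (r : ℂ) (a : ℤ) : hstar (C r * T a) = C (starRingEnd ℂ r) * T (-a) := by
  rw [hstar_eq_invert_map, ← single_eq_C_mul_T, AddMonoidAlgebra.mapRingHom_single,
    single_eq_C_mul_T, map_mul, invert_C, invert_T]

instance : StarRing LP where
  star := hstar
  star_involutive := hstar_hstar
  star_mul u v := (hstar_mul u v).trans (mul_comm _ _)
  star_add := hstar_add

lemma star_eq_hstar (u : LP) : star u = hstar u := rfl

lemma hstarM_eq_conjTranspose (A : Matrix (Fin 2) (Fin 2) LP) : hstarM A = Aᴴ := rfl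

lemma IsHerm.isHermitian {A : Matrix (Fin 2) (Fin 2) LP} (h : IsHerm A) : A.IsHermitian := h

lemma Sgn.mul_self {ε : ℂ} (h : Sgn ε) : ε * ε = 1 := by rcases h with rfl | rfl <;> norm_num
lemma Sgn.ne_zero {ε : ℂ} (h : Sgn ε) : ε ≠ 0 := by rcases h with rfl | rfl <;> norm_num
lemma Sgn.conj {ε : ℂ} (h : Sgn ε) : starRingEnd ℂ ε = ε := by rcases h with rfl | rfl <;> simp

lemma symT_iff (u : LP) (ε : ℂ) (c : ℤ) : SymT u ε c ↔ u = C ε * T c * invert u := by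
  refine ⟨fun h => ?_, fun h k => ?_⟩
  · ext k
    rw [coeff_C_mul_T_mul, h k]
    simp [coeff]
  · conv_lhs => rw [h]
    rw [coeff_C_mul_T_mul]
    simp [coeff]

namespace SymT

variable {u v : LP} {ε ε' : ℂ} {c c' : ℤ}

lemma of_eq (hu : SymT u ε c) (hε : ε = ε') (hc : c = c') : SymT u ε' c' :=
  hε ▸ hc ▸ hu

lemma mul (hu : SymT u ε c) (hv : SymT v ε' c') : SymT (u * v) (ε * ε') (c + c') := by
  rw [symT_iff] at hu hv ⊢
  conv_lhs => rw [hu, hv]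
  rw [map_mul, map_mul, T_add]
  ring

lemma add (hu : SymT u ε c) (hv : SymT v ε c) : SymT (u + v) ε c := by
  intro k
  simp only [coeff_add, hu k, hv k]
  ring

lemma neg (hu : SymT u ε c) : SymT (-u) ε c := by
  intro k
  simp only [coeff_neg, hu k]
  ring

lemma coeff_hstar (hε : Sgn ε) (hu : SymT u ε c) (k : ℤ) :
    coeff (QT.hstar u) k = ε * starRingEnd ℂ (coeff u (c + k)) := by
  rw [QT.coeff_hstar, hu, map_mul, hε.conj, sub_neg_eq_add]

lemma hstar (hε : Sgn ε) (hu : SymT u ε c) : SymT (QT.hstar u) ε (-c) := by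
  intro k
  rw [QT.coeff_hstar, QT.coeff_hstar, hu, map_mul, hε.conj]
  congr 3
  ring

lemma conj_coeff (hs : SymT u 1 0) (hH : QT.hstar u = u) (k : ℤ) :
    starRingEnd ℂ (coeff u k) = coeff u k := by
  conv_rhs => rw [← hH, hs.coeff_hstar (Or.inl rfl), one_mul, zero_add]

end SymT

lemma symT_zero (ε : ℂ) (c : ℤ) : SymT 0 ε c := fun k => by simp

lemma symT_one : SymT 1 1 0 := fun k => by
  simp only [← map_one C, coeff_C, one_mul, zero_sub, neg_eq_zero]

def symPair (ε : ℂ) (c g : ℤ) (s : ℂ) : LP := C s * T g + C (ε * s) * T (c - g)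

lemma symT_symPair {ε : ℂ} (hε : Sgn ε) (c g : ℤ) (s : ℂ) : SymT (symPair ε c g s) ε c := by
  intro k
  simp only [symPair, coeff_add, coeff_C_mul_T, mul_add, mul_ite, mul_zero, ← mul_assoc,
    hε.mul_self, one_mul]
  rw [add_comm]
  congr 1 <;> exact if_congr (by omega) rfl rfl

lemma hstar_symPair {ε : ℂ} (hε : Sgn ε) (c g : ℤ) (s : ℂ) :
    hstar (symPair ε c g s) = symPair ε (-c) (-g) (starRingEnd ℂ s) := by
  rw [symPair, symPair, hstar_add, hstar_C_mul_T, hstar_C_mul_T, map_mul, hε.conj]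
  congr 3
  ring

lemma coeff_symPair_mul (ε : ℂ) (c g : ℤ) (s : ℂ) (u : LP) (k : ℤ) :
    coeff (symPair ε c g s * u) k = s * coeff u (k - g) + ε * s * coeff u (k - (c - g)) := by
  rw [symPair, add_mul, coeff_add, coeff_C_mul_T_mul, coeff_C_mul_T_mul]

def DegLe (u : LP) (d : ℤ) : Prop := ∀ k, d < k → coeff u k = 0

lemma DegLe.le_of_mem_support {u : LP} {d k : ℤ} (hu : DegLe u d)
    (hk : k ∈ (AddMonoidAlgebra.coeff u).support) : k ≤ d :=
  not_lt.1 fun hlt => Finsupp.mem_support_iff.1 hk (hu k hlt)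

lemma DegLe.mul {u v : LP} {d e : ℤ} (hu : DegLe u d) (hv : DegLe v e) :
    DegLe (u * v) (d + e) := by
  classical
  intro k hk
  rw [coeff, AddMonoidAlgebra.coeff_mul]
  refine Finset.sum_eq_zero fun a ha => Finset.sum_eq_zero fun b hb => if_neg ?_
  have := hu.le_of_mem_support ha
  have := hv.le_of_mem_support hb
  omega

lemma DegLe.coeff_mul {u v : LP} {d e : ℤ} (hu : DegLe u d) (hv : DegLe v e) :
    coeff (u * v) (d + e) = coeff u d * coeff v e := by
  classical
  rw [coeff, AddMonoidAlgebra.coeff_mul, Finsupp.sum, Finset.sum_eq_single d, Finsupp.sum,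
    Finset.sum_eq_single e, if_pos rfl]
  · rfl
  · intro b _ hb
    exact if_neg (by omega)
  · intro he
    rw [Finsupp.notMem_support_iff.1 he, mul_zero, ite_self]
  · intro a ha had
    refine Finset.sum_eq_zero fun b hb => if_neg ?_
    have := hu.le_of_mem_support ha
    have := hv.le_of_mem_support hb
    omega
  · intro hd
    exact Finset.sum_eq_zero fun b _ => by simp [Finsupp.notMem_support_iff.1 hd]

lemma degLe_degL (u : LP) : DegLe u (degL u) := by
  intro k hk
  by_cases h : u = 0
  · rw [h]; rfl
  · rw [degL, dif_neg h] at hk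
    by_contra hc
    exact absurd ((AddMonoidAlgebra.coeff u).support.le_max' k (Finsupp.mem_support_iff.2 hc))
      (not_le.2 hk)

lemma coeff_degL_ne_zero {u : LP} (h : u ≠ 0) : coeff u (degL u) ≠ 0 := by
  rw [degL, dif_neg h]
  exact Finsupp.mem_support_iff.1 (Finset.max'_mem _ _)

lemma DegLe.degL_le {u : LP} {d : ℤ} (hu : DegLe u d) (hd : 0 ≤ d) : degL u ≤ d := by
  by_cases h : u = 0
  · rw [h, degL, dif_pos rfl]; exact hd
  · by_contra hlt
    exact coeff_degL_ne_zero h (hu _ (not_le.1 hlt))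

lemma SymT.degL_nonneg {u : LP} (hs : SymT u 1 0) : 0 ≤ degL u := by
  by_cases h : u = 0
  · rw [h, degL, dif_pos rfl]
  by_contra hneg
  have := hs (degL u)
  rw [one_mul, zero_sub, degLe_degL u (-degL u) (by omega)] at this
  exact coeff_degL_ne_zero h this

lemma SymT.eq_C_of_degL_nonpos {u : LP} (hs : SymT u 1 0) (h : degL u ≤ 0) :
    u = C (coeff u 0) := by
  ext k
  rw [coeff_C]
  split_ifs with hk
  · rw [hk]
  · rcases lt_or_gt_of_ne hk with hk | hk
    · rw [hs, one_mul, zero_sub, degLe_degL u _ (by omega)]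
    · exact degLe_degL u k (by omega)

lemma SymT.degLe_hstar {u : LP} {ε : ℂ} {c d : ℤ} (hε : Sgn ε) (hu : SymT u ε c)
    (hd : DegLe u d) : DegLe (QT.hstar u) (d - c) := fun k hk => by
  rw [hu.coeff_hstar hε, hd _ (by omega), map_zero, mul_zero]

lemma top_coeff_eq_of_mul_sub_mul_eq_C {u v w x : LP} {m n p r : ℤ} {d : ℂ}
    (hu : DegLe u m) (hv : DegLe v n) (hw : DegLe w p) (hx : DegLe x r)
    (huv : coeff u m * coeff v n ≠ 0) (hwx : coeff w p * coeff x r ≠ 0) (hpos : 0 < m + n)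
    (h : u * v - w * x = C d) :
    m + n = p + r ∧ coeff u m * coeff v n = coeff w p * coeff x r := by
  have hco : ∀ k ≠ 0, coeff (u * v) k = coeff (w * x) k := fun k hk => by
    simpa [coeff_C, hk, sub_eq_zero] using congrArg (coeff · k) h
  rcases lt_trichotomy (m + n) (p + r) with hlt | heq | hgt
  · have := hco (p + r) (by omega)
    rw [hu.mul hv _ hlt, hw.coeff_mul hx] at this
    exact absurd this.symm hwx
  · refine ⟨heq, ?_⟩
    rw [← hu.coeff_mul hv, ← hw.coeff_mul hx, ← heq]
    exact hco _ hpos.ne'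
  · have := hco (m + n) hpos.ne'
    rw [hw.mul hx _ hgt, hu.coeff_mul hv] at this
    exact absurd this huv

lemma exists_symT_degLe_sub_one {u v w : LP} {ε : ℂ} {c m n q : ℤ} (hε : Sgn ε)
    (heven : Even c → ε = 1) (hw : SymT w ε c)
    (hu : DegLe u m) (hv : DegLe v n) (hwq : DegLe w q) (hdeg : m + n = q + (q - c))
    (htop : coeff u m * coeff v n = coeff w q * (ε * starRingEnd ℂ (coeff w q)))
    (hb : starRingEnd ℂ (coeff v n) = coeff v n) (hb0 : coeff v n ≠ 0) (hnm : n ≤ m) :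
    ∃ e, SymT e ε c ∧ DegLe (u + e * hstar w + hstar e * w + e * hstar e * v) (m - 1) := by
  set a := coeff u m
  set b := coeff v n
  set t := coeff w q
  have hu0 : ∀ k, m < k → coeff u k = 0 := hu
  have hv0 : ∀ k, n < k → coeff v k = 0 := hv
  have hw0 : ∀ k, q < k → coeff w k = 0 := hwq
  have hw'0 : ∀ k, q - c < k → coeff (hstar w) k = 0 := hw.degLe_hstar hε hwq
  have hu1 : ∀ k, k = m → coeff u k = a := by rintro k rfl; rfl
  have hv1 : ∀ k, k = n → coeff v k = b := by rintro k rfl; rfl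
  have hw1 : ∀ k, k = q → coeff w k = t := by rintro k rfl; rfl
  have hw'1 : ∀ k, k = q - c → coeff (hstar w) k = ε * starRingEnd ℂ t := by
    rintro k rfl
    rw [hw.coeff_hstar hε, add_sub_cancel]
  -- `s z^g` times the top term of `w⋆` lands on the top term `z^m` of `u`
  set g := m + c - q
  obtain hlt | rfl := hnm.lt_or_eq
  · refine ⟨symPair ε c g (-t / b), symT_symPair hε c g _, fun k hk => ?_⟩
    simp only [coeff_add, mul_assoc, coeff_symPair_mul, hstar_symPair hε]
    obtain rfl | hk := (show k = m ∨ m < k by omega)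
    · simp (disch := omega) only [hv0, hw0, hw'0, hu1, hv1, hw1, hw'1]
      simp only [map_div₀, map_neg, hb]
      field_simp
      linear_combination b * htop
    · simp (disch := omega) only [hu0, hv0, hw0, hw'0]
      ring
  · have hε1 : ε = 1 := heven ⟨q - n, by omega⟩
    subst hε1
    -- now `2 g = c`, so the two terms of `symPair` coincide
    refine ⟨symPair 1 c g (-t / (2 * b)), symT_symPair hε c g _, fun k hk => ?_⟩
    simp only [coeff_add, mul_assoc, coeff_symPair_mul, hstar_symPair hε]
    obtain rfl | hk := (show k = n ∨ n < k by omega)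
    · simp (disch := omega) only [hu1, hv1, hw1, hw'1]
      simp only [map_div₀, map_neg, map_mul, map_ofNat, hb]
      field_simp
      linear_combination 4 * htop
    · simp (disch := omega) only [hu0, hv0, hw0, hw'0]
      ring

section Matrices

variable {A X Y : Matrix (Fin 2) (Fin 2) LP} {ε₀ : ℂ} {c₀ : ℤ}

def SymPattern (V : Matrix (Fin 2) (Fin 2) LP) (ε₀ : ℂ) (c₀ : ℤ) : Prop :=
  SymT (V 0 0) 1 0 ∧ SymT (V 1 1) 1 0 ∧ SymT (V 0 1) ε₀ c₀ ∧ SymT (V 1 0) ε₀ (-c₀)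

lemma symPattern_one : SymPattern 1 ε₀ c₀ :=
  ⟨symT_one, symT_one, symT_zero _ _, symT_zero _ _⟩

lemma SymPattern.mul (hε : Sgn ε₀) (hX : SymPattern X ε₀ c₀) (hY : SymPattern Y ε₀ c₀) :
    SymPattern (X * Y) ε₀ c₀ := by
  obtain ⟨x00, x11, x01, x10⟩ := hX
  obtain ⟨y00, y11, y01, y10⟩ := hY
  simp only [SymPattern, mul_apply, Fin.sum_univ_two]
  refine ⟨?_, ?_, ?_, ?_⟩
  · exact ((x00.mul y00).of_eq (one_mul 1) (add_zero 0)).add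
      ((x01.mul y10).of_eq hε.mul_self (add_neg_cancel c₀))
  · exact ((x10.mul y01).of_eq hε.mul_self (neg_add_cancel c₀)).add
      ((x11.mul y11).of_eq (one_mul 1) (add_zero 0))
  · exact ((x00.mul y01).of_eq (one_mul ε₀) (zero_add c₀)).add
      ((x01.mul y11).of_eq (mul_one ε₀) (add_zero c₀))
  · exact ((x10.mul y00).of_eq (mul_one ε₀) (add_zero _)).add
      ((x11.mul y10).of_eq (one_mul ε₀) (zero_add _))

lemma SymPattern.conjTranspose (hε : Sgn ε₀) (hX : SymPattern X ε₀ c₀) :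
    SymPattern Xᴴ ε₀ c₀ := by
  obtain ⟨x00, x11, x01, x10⟩ := hX
  refine ⟨?_, ?_, ?_, x01.hstar hε⟩
  · simpa [star_eq_hstar] using x00.hstar (Or.inl rfl)
  · simpa [star_eq_hstar] using x11.hstar (Or.inl rfl)
  · simpa [star_eq_hstar] using x10.hstar hε

lemma StrongInv.mul (hX : StrongInv X) (hY : StrongInv Y) : StrongInv (X * Y) := by
  obtain ⟨l, k, hl, hXdet⟩ := hX
  obtain ⟨l', k', hl', hYdet⟩ := hY
  refine ⟨l * l', k + k', mul_ne_zero hl hl', ?_⟩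
  rw [det_mul, hXdet, hYdet, map_mul, T_add]
  ring

lemma strongInv_of_det_eq_C {l : ℂ} (hl : l ≠ 0) (h : X.det = C l) : StrongInv X :=
  ⟨l, 0, hl, by rw [h, T_zero, mul_one]⟩

def swapIdx (A : Matrix (Fin 2) (Fin 2) LP) : Matrix (Fin 2) (Fin 2) LP :=
  A.submatrix (Equiv.swap 0 1) (Equiv.swap 0 1)

@[simp] lemma swapIdx_apply_zero_zero : swapIdx A 0 0 = A 1 1 := rfl
@[simp] lemma swapIdx_apply_one_zero : swapIdx A 1 0 = A 0 1 := rfl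
@[simp] lemma swapIdx_apply_one_one : swapIdx A 1 1 = A 0 0 := rfl

lemma swapIdx_swapIdx (A : Matrix (Fin 2) (Fin 2) LP) : swapIdx (swapIdx A) = A := by
  ext i j
  fin_cases i <;> fin_cases j <;> rfl

lemma swapIdx_mul (X Y : Matrix (Fin 2) (Fin 2) LP) : swapIdx (X * Y) = swapIdx X * swapIdx Y :=
  (submatrix_mul_equiv X Y _ _ _).symm

lemma swapIdx_conjTranspose (A : Matrix (Fin 2) (Fin 2) LP) : swapIdx Aᴴ = (swapIdx A)ᴴ :=
  (conjTranspose_submatrix A _ _).symm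

lemma det_swapIdx (A : Matrix (Fin 2) (Fin 2) LP) : (swapIdx A).det = A.det :=
  det_submatrix_equiv_self _ A

lemma SymPattern.swapIdx (h : SymPattern A ε₀ c₀) : SymPattern (swapIdx A) ε₀ (-c₀) :=
  ⟨h.2.1, h.1, h.2.2.2, by simpa using h.2.2.1⟩

def shear (e : LP) : Matrix (Fin 2) (Fin 2) LP := !![1, e; 0, 1]

lemma det_shear (e : LP) : (shear e).det = 1 := by
  simp [shear, det_fin_two_of]

lemma symPattern_shear {e : LP} (he : SymT e ε₀ c₀) : SymPattern (shear e) ε₀ c₀ :=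
  ⟨symT_one, symT_one, he, symT_zero _ _⟩

lemma shear_mul_mul_conjTranspose_apply_zero_zero (e : LP) (A : Matrix (Fin 2) (Fin 2) LP) :
    (shear e * A * (shear e)ᴴ) 0 0
      = A 0 0 + e * A 1 0 + hstar e * A 0 1 + e * hstar e * A 1 1 := by
  simp only [shear, mul_apply, Fin.sum_univ_two, conjTranspose_apply, of_apply, cons_val',
    cons_val_zero, cons_val_one, empty_val', cons_val_fin_one, star_eq_hstar, hstar_one]
  ring

lemma shear_mul_mul_conjTranspose_apply_one_one (e : LP) (A : Matrix (Fin 2) (Fin 2) LP) :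
    (shear e * A * (shear e)ᴴ) 1 1 = A 1 1 := by
  simp only [shear, mul_apply, Fin.sum_univ_two, conjTranspose_apply, of_apply, cons_val',
    cons_val_zero, cons_val_one, empty_val', cons_val_fin_one, star_zero, star_one]
  ring

end Matrices

section Reduction

variable {A : Matrix (Fin 2) (Fin 2) LP} {ε₀ : ℂ} {c₀ : ℤ}

def HasZeroEntryConj (A : Matrix (Fin 2) (Fin 2) LP) (ε₀ : ℂ) (c₀ : ℤ) : Prop :=
  ∃ V, StrongInv V ∧ SymPattern V ε₀ c₀ ∧ ∃ i j, (V * A * Vᴴ) i j = 0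

lemma HasZeroEntryConj.of_apply_eq_zero {i j : Fin 2} (h : A i j = 0) :
    HasZeroEntryConj A ε₀ c₀ :=
  ⟨1, strongInv_of_det_eq_C one_ne_zero (by simp), symPattern_one, i, j, by simpa using h⟩

lemma HasZeroEntryConj.of_conj {E : Matrix (Fin 2) (Fin 2) LP} (hε : Sgn ε₀)
    (hE : StrongInv E) (hEP : SymPattern E ε₀ c₀) (h : HasZeroEntryConj (E * A * Eᴴ) ε₀ c₀) :
    HasZeroEntryConj A ε₀ c₀ := by
  obtain ⟨V, hV, hVP, i, j, hij⟩ := h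
  refine ⟨V * E, hV.mul hE, hVP.mul hε hEP, i, j, ?_⟩
  rw [conjTranspose_mul]
  simpa only [Matrix.mul_assoc] using hij

lemma HasZeroEntryConj.of_swapIdx (h : HasZeroEntryConj (swapIdx A) ε₀ (-c₀)) :
    HasZeroEntryConj A ε₀ c₀ := by
  obtain ⟨V, hV, hVP, i, j, hij⟩ := h
  refine ⟨swapIdx V, by rwa [StrongInv, det_swapIdx], by simpa using hVP.swapIdx,
    Equiv.swap 0 1 i, Equiv.swap 0 1 j, ?_⟩
  rw [← swapIdx_swapIdx A, ← swapIdx_conjTranspose, ← swapIdx_mul, ← swapIdx_mul, swapIdx,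
    submatrix_apply, Equiv.swap_apply_self, Equiv.swap_apply_self]
  exact hij

lemma HasZeroEntryConj.of_degL_nonpos (hH : A.IsHermitian) (hP : SymPattern A ε₀ c₀)
    (h00 : A 0 0 ≠ 0) (hdeg : degL (A 0 0) ≤ 0) : HasZeroEntryConj A ε₀ c₀ := by
  have hC := hP.1.eq_C_of_degL_nonpos hdeg
  refine ⟨!![1, 0; -A 1 0, A 0 0], strongInv_of_det_eq_C (l := coeff (A 0 0) 0) ?_ ?_,
    ⟨symT_one, hP.1, symT_zero _ _, hP.2.2.2.neg⟩, 0, 1, ?_⟩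
  · exact fun h => h00 (by rw [hC, h, map_zero])
  · simpa [det_fin_two_of] using hC
  · simp only [mul_apply, Fin.sum_univ_two, conjTranspose_apply, of_apply, cons_val',
      cons_val_zero, cons_val_one, empty_val', cons_val_fin_one, star_neg, hH.apply]
    ring

lemma exists_symT_degLe_shear_conj (hH : A.IsHermitian) (hε : Sgn ε₀)
    (heven : Even c₀ → ε₀ = 1) (hP : SymPattern A ε₀ c₀) {d : ℂ} (hdet : A.det = C d)
    (h00 : A 0 0 ≠ 0) (h01 : A 0 1 ≠ 0) (h11 : A 1 1 ≠ 0)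
    (hnm : degL (A 1 1) ≤ degL (A 0 0)) (hm : 0 < degL (A 0 0)) :
    ∃ e, SymT e ε₀ c₀ ∧ DegLe ((shear e * A * (shear e)ᴴ) 0 0) (degL (A 0 0) - 1) := by
  have h10 : A 1 0 = hstar (A 0 1) := (hH.apply 1 0).symm
  have hq := degLe_degL (A 0 1)
  have htop10 := hP.2.2.1.coeff_hstar hε (degL (A 0 1) - c₀)
  rw [add_sub_cancel] at htop10
  have ht : coeff (A 0 1) (degL (A 0 1)) * (ε₀ * starRingEnd ℂ (coeff (A 0 1) (degL (A 0 1))))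
      ≠ 0 :=
    mul_ne_zero (coeff_degL_ne_zero h01)
      (mul_ne_zero hε.ne_zero (by simpa using coeff_degL_ne_zero h01))
  obtain ⟨hdeg, htop⟩ := top_coeff_eq_of_mul_sub_mul_eq_C (degLe_degL (A 0 0))
    (degLe_degL (A 1 1)) hq (hP.2.2.1.degLe_hstar hε hq)
    (mul_ne_zero (coeff_degL_ne_zero h00) (coeff_degL_ne_zero h11)) (by rw [htop10]; exact ht)
    (by linarith [hP.2.1.degL_nonneg]) (by rw [← h10, ← det_fin_two, hdet])
  rw [htop10] at htop
  obtain ⟨e, he, hlow⟩ := exists_symT_degLe_sub_one hε heven hP.2.2.1 (degLe_degL _)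
    (degLe_degL _) hq hdeg htop (hP.2.1.conj_coeff (hH.apply 1 1) _) (coeff_degL_ne_zero h11) hnm
  refine ⟨e, he, ?_⟩
  rw [shear_mul_mul_conjTranspose_apply_zero_zero, h10]
  exact hlow

def degSum (A : Matrix (Fin 2) (Fin 2) LP) : ℕ := (degL (A 0 0)).toNat + (degL (A 1 1)).toNat

lemma degSum_shear_conj_lt {e : LP}
    (hlow : DegLe ((shear e * A * (shear e)ᴴ) 0 0) (degL (A 0 0) - 1)) (hm : 0 < degL (A 0 0)) :
    degSum (shear e * A * (shear e)ᴴ) < degSum A := by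
  have := hlow.degL_le (by omega)
  rw [degSum, degSum, shear_mul_mul_conjTranspose_apply_one_one]
  omega

theorem HasZeroEntryConj.of_det_eq_C {d : ℂ} (hH : A.IsHermitian) (hε : Sgn ε₀)
    (heven : Even c₀ → ε₀ = 1) (hP : SymPattern A ε₀ c₀) (hdet : A.det = C d) :
    HasZeroEntryConj A ε₀ c₀ := by
  induction hN : degSum A using Nat.strong_induction_on generalizing A c₀ with
  | _ N ih =>
  have step : ∀ {B : Matrix (Fin 2) (Fin 2) LP} {c : ℤ}, B.IsHermitian → (Even c → ε₀ = 1) →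
      SymPattern B ε₀ c → B.det = C d → degSum B = N → B 0 0 ≠ 0 → B 0 1 ≠ 0 → B 1 1 ≠ 0 →
      degL (B 1 1) ≤ degL (B 0 0) → 0 < degL (B 0 0) → HasZeroEntryConj B ε₀ c := by
    intro B c hH heven hP hdet hN h00 h01 h11 hnm hm
    obtain ⟨e, he, hlow⟩ := exists_symT_degLe_shear_conj hH hε heven hP hdet h00 h01 h11 hnm hm
    have hE := symPattern_shear he
    refine .of_conj hε (strongInv_of_det_eq_C one_ne_zero (det_shear e)) hE
      (ih _ (hN ▸ degSum_shear_conj_lt hlow hm) (isHermitian_mul_mul_conjTranspose _ hH) heven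
        ((hE.mul hε hP).mul hε (hE.conjTranspose hε)) ?_ rfl)
    rw [det_mul, det_mul, det_conjTranspose, det_shear, star_one, one_mul, mul_one, hdet]
  by_cases h00 : A 0 0 = 0
  · exact .of_apply_eq_zero h00
  by_cases h01 : A 0 1 = 0
  · exact .of_apply_eq_zero h01
  by_cases h11 : A 1 1 = 0
  · exact .of_apply_eq_zero h11
  rcases le_or_gt (degL (A 1 1)) (degL (A 0 0)) with hnm | hnm
  · rcases le_or_gt (degL (A 0 0)) 0 with hm | hm
    · exact .of_degL_nonpos hH hP h00 hm
    · exact step hH heven hP hdet hN h00 h01 h11 hnm hm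
  · have h10 : A 1 0 ≠ 0 := fun h => h01 (by rw [← hH.apply 0 1, h, star_zero])
    have := hP.1.degL_nonneg
    refine .of_swapIdx (step (hH.submatrix _) (fun h => heven (by simpa using h)) hP.swapIdx
      (by rw [det_swapIdx, hdet]) ?_ h11 h10 h00 hnm.le (by rw [swapIdx_apply_zero_zero]; omega))
    rw [← hN, degSum, degSum, swapIdx_apply_zero_zero, swapIdx_apply_one_one, add_comm]

end Reduction

theorem zero_entry_via_strongly_invertible_conjugation_general
    (A : Matrix (Fin 2) (Fin 2) LP) (hH : IsHerm A)
    (ε₀ : ℂ) (c₀ : ℤ) (hε₀ : Sgn ε₀)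
    (hcase : Odd c₀ ∨ (ε₀ = 1 ∧ Even c₀))
    (h11 : SymT (A 0 0) 1 0) (h22 : SymT (A 1 1) 1 0)
    (h12 : SymT (A 0 1) ε₀ c₀) (h21 : SymT (A 1 0) ε₀ (-c₀))
    (Cst : ℝ) (hdet : A.det = LaurentPolynomial.C (Cst : ℂ)) :
    ∃ V : Matrix (Fin 2) (Fin 2) LP, StrongInv V ∧
      SymT (V 0 0) 1 0 ∧ SymT (V 1 1) 1 0 ∧
      SymT (V 0 1) ε₀ c₀ ∧ SymT (V 1 0) ε₀ (-c₀) ∧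
      ∃ i j, (V * A * hstarM V) i j = 0 := by
  have heven : Even c₀ → ε₀ = 1 := fun h => (hcase.resolve_left (Int.not_odd_iff_even.2 h)).1
  obtain ⟨V, hV, ⟨v00, v11, v01, v10⟩, hzero⟩ :=
    HasZeroEntryConj.of_det_eq_C hH.isHermitian hε₀ heven ⟨h11, h22, h12, h21⟩ hdet
  simp only [hstarM_eq_conjTranspose]
  exact ⟨V, hV, v00, v11, v01, v10, hzero⟩

/-- producing a zero entry via strongly invertible symmetric conjugation
(Lemma 3.6 of the paper). -/
theorem zero_entry_via_strongly_invertible_conjugation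
    (A : Matrix (Fin 2) (Fin 2) LP) (hH : IsHerm A)
    (ε₀ : ℂ) (c₀ : ℤ) (hε₀ : Sgn ε₀)
    (hcase : Odd c₀ ∨ (ε₀ = 1 ∧ Even c₀))
    (h11 : SymT (A 0 0) 1 0) (h22 : SymT (A 1 1) 1 0)
    (h12 : SymT (A 0 1) ε₀ c₀) (h21 : SymT (A 1 0) ε₀ (-c₀))
    (Cst : ℝ) (hC : Cst < 0) (hdet : A.det = LaurentPolynomial.C (Cst : ℂ)) :
    ∃ V : Matrix (Fin 2) (Fin 2) LP, StrongInv V ∧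
      SymT (V 0 0) 1 0 ∧ SymT (V 1 1) 1 0 ∧
      SymT (V 0 1) ε₀ c₀ ∧ SymT (V 1 0) ε₀ (-c₀) ∧
      ∃ i j, (V * A * hstarM V) i j = 0 :=
  zero_entry_via_strongly_invertible_conjugation_general A hH ε₀ c₀ hε₀ hcase h11 h22 h12 h21 Cst
    hdet

end QT
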